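/- arXiv:1407.4425 — 2 statements merged into one kernel-verified Lean document; each statement's English description precedes it below -/
import Mathlib

section
/- A binary algebra (A, *) in Set (i.e., an algebra for HX = X × X) is corecursive if and only if A has an idempotent element i = i * i which is the unique completely factorizable element of A, where the set of completely factorizable elements is the largest subset S ⊆ A such that every a ∈ S can be written as a = b * c with b, c ∈ S. -/
/-!
A solution `s` of a coalgebra `e : X → X × X` has a factorization-closed range, so its values
are completely factorizable; conversely a factorization-closed set `S` carries a coalgebra
(choose factorizations) whose solution is the inclusion. Hence the completely factorizable
elements are exactly the values of solutions. A constant map at an idempotent `i` solves every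
coalgebra, so corecursiveness forces every solution to be constant at `i`, and uniqueness of
the completely factorizable element forces the same.
-/

/-- `a` is completely factorizable for the binary operation `op` if it belongs to some set `S`
each of whose elements factorizes as `op b c` with `b, c ∈ S` (i.e. `a` is in the largest
such set, the greatest fixed point). -/
def CompletelyFactorizable {A : Type} (op : A → A → A) (a : A) : Prop :=
  ∃ S : Set A, a ∈ S ∧ ∀ x ∈ S, ∃ b ∈ S, ∃ c ∈ S, x = op b c

/-- `s` satisfies the defining equation of `e†`. -/
def IsSolution {X A : Type} (op : A → A → A) (e : X → X × X) (s : X → A) : Prop :=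
  ∀ x, s x = op (s (e x).1) (s (e x).2)

theorem isSolution_const {X A : Type} {op : A → A → A} {i : A} (hi : i = op i i)
    (e : X → X × X) : IsSolution op e fun _ => i :=
  fun _ => hi

theorem completelyFactorizable_iff_exists_isSolution {A : Type} {op : A → A → A} {a : A} :
    CompletelyFactorizable op a ↔
      ∃ (X : Type) (e : X → X × X) (s : X → A), IsSolution op e s ∧ a ∈ Set.range s := by
  constructor
  · rintro ⟨S, haS, hS⟩
    choose b hb c hc hbc using hS
    exact ⟨S, fun x => (⟨b x x.2, hb x x.2⟩, ⟨c x x.2, hc x x.2⟩), Subtype.val,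
      fun x => hbc x x.2, ⟨a, haS⟩, rfl⟩
  · rintro ⟨X, e, s, hs, ha⟩
    refine ⟨Set.range s, ha, ?_⟩
    rintro _ ⟨x, rfl⟩
    exact ⟨_, Set.mem_range_self _, _, Set.mem_range_self _, hs x⟩

theorem completelyFactorizable_of_idempotent {A : Type} {op : A → A → A} {i : A}
    (hi : i = op i i) : CompletelyFactorizable op i :=
  completelyFactorizable_iff_exists_isSolution.2
    ⟨Unit, fun _ => ((), ()), fun _ => i, isSolution_const hi _, (), rfl⟩

/-- A binary algebra `(A, op)` in `Set` is corecursive iff it has an idempotent `i = op i i`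
which is the unique completely factorizable element. -/
theorem binary_corecursive_iff_unique_completely_factorizable_idempotent
    (A : Type) (op : A → A → A) :
    (∀ (X : Type) (e : X → X × X),
        ∃! s : X → A, ∀ x, s x = op (s (e x).1) (s (e x).2)) ↔
      ∃ i : A, i = op i i ∧ ∀ a : A, CompletelyFactorizable op a ↔ a = i := by
  constructor
  · intro hcorec
    obtain ⟨s, hs, -⟩ := hcorec Unit fun _ => ((), ())
    have hi : s () = op (s ()) (s ()) := hs ()
    refine ⟨s (), hi, fun a => ⟨?_, ?_⟩⟩
    · intro hfact
      obtain ⟨X, e, t, ht, x, rfl⟩ := completelyFactorizable_iff_exists_isSolution.1 hfact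
      exact congrFun ((hcorec X e).unique ht (isSolution_const hi e)) x
    · rintro rfl
      exact completelyFactorizable_of_idempotent hi
  · rintro ⟨i, hi, hunique⟩ X e
    refine ⟨fun _ => i, isSolution_const hi e, fun s hs => funext fun x => ?_⟩
    exact (hunique (s x)).1
      (completelyFactorizable_iff_exists_isSolution.2 ⟨X, e, s, hs, x, rfl⟩)
end

section
/- An initial Bloom algebra for H is precisely a terminal H-coalgebra: if (T,τ) is terminal in Coalg H then (T, τ⁻¹) with the canonical solution operation is initial in the category of Bloom algebras, and conversely the underlying algebra of an initial Bloom algebra has invertible structure yielding a terminal coalgebra. -/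
open CategoryTheory CategoryTheory.Limits CategoryTheory.Endofunctor

universe v u

variable {A : Type u} [Category.{v} A]

/-- A Bloom algebra: an `H`-algebra together with a functorial solution operation. -/
structure BloomAlg (H : A ⥤ A) where
  a : A
  str : H.obj a ⟶ a
  sol : ∀ X : Endofunctor.Coalgebra H, X.V ⟶ a
  isSol : ∀ X : Endofunctor.Coalgebra H, sol X = X.str ≫ H.map (sol X) ≫ str
  functorial : ∀ (X Y : Endofunctor.Coalgebra H) (h : X ⟶ Y), h.f ≫ sol Y = sol X

/-- A homomorphism of Bloom algebras: a solution-preserving algebra homomorphism. -/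
@[ext]
structure BloomHom {H : A ⥤ A} (B C : BloomAlg H) where
  f : B.a ⟶ C.a
  hom : B.str ≫ f = H.map f ≫ C.str
  pres : ∀ X : Endofunctor.Coalgebra H, B.sol X ≫ f = C.sol X

instance {H : A ⥤ A} : Category (BloomAlg H) where
  Hom := BloomHom
  id B := ⟨𝟙 _, by simp, fun X => by simp⟩
  comp {B C D} f g := ⟨f.f ≫ g.f,
    by rw [← Category.assoc, f.hom, Category.assoc, g.hom, H.map_comp, Category.assoc],
    fun X => by rw [← Category.assoc, f.pres, g.pres]⟩
  id_comp f := by apply BloomHom.ext; simp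
  comp_id f := by apply BloomHom.ext; simp
  assoc f g h := by apply BloomHom.ext; simp

/-- The terminal coalgebra, regarded as an algebra via the inverse `t` of its structure map,
with the canonical solution operation sending a coalgebra to the unique coalgebra
homomorphism into `T`. -/
def canonicalBloom (H : A ⥤ A) (T : Endofunctor.Coalgebra H) (hT : IsTerminal T)
    (t : H.obj T.V ⟶ T.V) (ht1 : T.str ≫ t = 𝟙 T.V) : BloomAlg H where
  a := T.V
  str := t
  sol X := (hT.from X).f
  isSol X := by
    rw [← Category.assoc, (hT.from X).h, Category.assoc, ht1, Category.comp_id]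
  functorial X Y h :=
    congrArg Endofunctor.Coalgebra.Hom.f (hT.hom_ext (h ≫ hT.from Y) (hT.from X))

/-!
Both directions rest on one observation: in any Bloom algebra `B`, the solution `B.sol X` of a
coalgebra `X` whose structure map has a right inverse `t` is an algebra homomorphism out of
`(X.V, t)`, and it preserves solutions because of functoriality. For a terminal coalgebra this
gives the unique map into `B`. Conversely, Lambek's argument (applied to the Bloom algebra
structure on `H B`) makes the structure map of an initial `B` invertible; then every `B.sol X`
is a coalgebra map into `(B, str⁻¹)`, and `B.sol` of that coalgebra is a Bloom endomorphism
of `B`, hence the identity, which forces uniqueness.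
-/

namespace BloomAlg

variable {H : A ⥤ A}

theorem comp_sol_eq_map_sol_comp_str (B : BloomAlg H) {X : Endofunctor.Coalgebra H}
    {t : H.obj X.V ⟶ X.V} (ht : t ≫ X.str = 𝟙 _) :
    t ≫ B.sol X = H.map (B.sol X) ≫ B.str := by
  conv_lhs => rw [B.isSol X]
  rw [← Category.assoc, ht, Category.id_comp]

section Terminal

variable (T : Endofunctor.Coalgebra H) (hT : IsTerminal T) (t : H.obj T.V ⟶ T.V)
  (ht1 : T.str ≫ t = 𝟙 T.V)

theorem canonicalBloom_sol_self : (canonicalBloom H T hT t ht1).sol T = 𝟙 T.V :=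
  congrArg Endofunctor.Coalgebra.Hom.f (hT.hom_ext (hT.from T) (𝟙 T))

def solHom (B : BloomAlg H) (ht2 : t ≫ T.str = 𝟙 (H.obj T.V)) :
    canonicalBloom H T hT t ht1 ⟶ B :=
  ⟨B.sol T, B.comp_sol_eq_map_sol_comp_str ht2, fun X => B.functorial X T (hT.from X)⟩

def isInitialCanonicalBloom (ht2 : t ≫ T.str = 𝟙 (H.obj T.V)) :
    IsInitial (canonicalBloom H T hT t ht1) :=
  IsInitial.ofUniqueHom (fun B => solHom T hT t ht1 B ht2) fun B m => BloomHom.ext <| by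
    change m.f = B.sol T
    rw [← m.pres T, canonicalBloom_sol_self]
    exact (Category.id_comp _).symm

end Terminal

def applyFunctor (B : BloomAlg H) : BloomAlg H where
  a := H.obj B.a
  str := H.map B.str
  sol X := X.str ≫ H.map (B.sol X)
  isSol X := by
    rw [← H.map_comp, Category.assoc, ← B.isSol X]
  functorial X Y h := by
    rw [← Category.assoc, ← h.h, Category.assoc, ← H.map_comp, B.functorial X Y h]

def strHom (B : BloomAlg H) : B.applyFunctor ⟶ B :=
  ⟨B.str, rfl, fun X => (Category.assoc _ _ _).trans (B.isSol X).symm⟩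

theorem isIso_str_of_isInitial {B : BloomAlg H} (hB : IsInitial B) : IsIso B.str := by
  let u := hB.to B.applyFunctor
  have hus : u.f ≫ B.str = 𝟙 B.a := congrArg BloomHom.f (hB.hom_ext (u ≫ B.strHom) (𝟙 B))
  refine ⟨u.f, ?_, hus⟩
  change B.str ≫ u.f = _
  rw [u.hom]
  exact (H.map_comp u.f B.str).symm.trans ((congrArg H.map hus).trans (H.map_id _))

section Iso

variable (B : BloomAlg H) [IsIso B.str]

noncomputable abbrev invCoalgebra : Endofunctor.Coalgebra H :=
  Endofunctor.Coalgebra.mk B.a (inv B.str)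

noncomputable def solCoalgHom (X : Endofunctor.Coalgebra H) : X ⟶ B.invCoalgebra :=
  ⟨B.sol X, by
    conv_rhs => rw [B.isSol X]
    simp only [Category.assoc, IsIso.hom_inv_id, Category.comp_id]⟩

noncomputable def solEndo : B ⟶ B :=
  ⟨B.sol B.invCoalgebra,
    B.comp_sol_eq_map_sol_comp_str (X := B.invCoalgebra) (IsIso.hom_inv_id B.str),
    fun X => B.functorial X _ (B.solCoalgHom X)⟩

theorem sol_invCoalgebra_of_isInitial (hB : IsInitial B) : B.sol B.invCoalgebra = 𝟙 B.a :=
  congrArg BloomHom.f (hB.hom_ext B.solEndo (𝟙 B))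

noncomputable def isTerminalInvCoalgebra (h : B.sol B.invCoalgebra = 𝟙 B.a) :
    IsTerminal B.invCoalgebra :=
  IsTerminal.ofUniqueHom B.solCoalgHom fun X m => Endofunctor.Coalgebra.Hom.ext <| by
    change m.f = B.sol X
    rw [← B.functorial X _ m, h, Category.comp_id]

end Iso

end BloomAlg

/-- An initial Bloom algebra is precisely a terminal coalgebra: the terminal coalgebra with
its canonical solution operation is initial among Bloom algebras, and conversely the
structure map of an initial Bloom algebra is invertible and its inverse yields a terminal
coalgebra. -/
theorem initial_bloom_iff_terminal_coalgebra (H : A ⥤ A) :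
    (∀ (T : Endofunctor.Coalgebra H) (hT : IsTerminal T)
        (t : H.obj T.V ⟶ T.V) (ht1 : T.str ≫ t = 𝟙 T.V) (_ : t ≫ T.str = 𝟙 (H.obj T.V)),
        Nonempty (IsInitial (canonicalBloom H T hT t ht1)))
    ∧ (∀ B : BloomAlg H, Nonempty (IsInitial B) →
        ∃ s : B.a ⟶ H.obj B.a, B.str ≫ s = 𝟙 (H.obj B.a) ∧ s ≫ B.str = 𝟙 B.a ∧
          Nonempty (IsTerminal (Endofunctor.Coalgebra.mk B.a s))) := by
  refine ⟨fun T hT t ht1 ht2 => ⟨BloomAlg.isInitialCanonicalBloom T hT t ht1 ht2⟩, ?_⟩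
  rintro B ⟨hB⟩
  have := BloomAlg.isIso_str_of_isInitial hB
  exact ⟨inv B.str, IsIso.hom_inv_id _, IsIso.inv_hom_id _,
    ⟨B.isTerminalInvCoalgebra (B.sol_invCoalgebra_of_isInitial hB)⟩⟩
end
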